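/- Fix positive integers N, K, β > 0, r ∈ (0,1], and s ∈ (0,1), with the random patterns ξ and examples η^{μ,a} as in the context. For each M let M₁ = ⌈sM⌉ and M₂ = M − M₁ (assume M large enough that M₂ ≥ 1), s_M = M₁/M, ρ_M = (1−r²)/(M r²), ρ_{s,M} = ρ_M/s_M, ρ_{u,M} = ρ_M/(1−s_M); regard the first M₁ examples per pattern as labelled and the remaining M₂ as unlabelled, and set ñ_μ(σ) = (1/(M₁N))·∑_{b=1}^{M₁} ∑_{i=1}^N η_i^{μ,b} σ_i and n_{μ,a}(σ) = (1/N)·∑_{i=1}^N η_i^{μ,M₁+a} σ_i. Define the semi-supervised Hamiltonian H^Semi_M(σ) = −(N/(2r²M₂))·∑_{a=1}^{M₂} ∑_{μ=1}^K [ s_M·ñ_μ(σ)/√(1+ρ_{s,M}) + (1−s_M)·n_{μ,a}(σ)/√(1+ρ_{u,M}) ]² and the Hopfield Hamiltonian H^Hop(σ) = −(N/2)·∑_{μ=1}^K ((1/N)·∑_{i=1}^N ξ_i^μ σ_i)². Then almost surely, for every σ ∈ {−1,+1}^N, the Boltzmann–Gibbs probability exp(−β·H^Semi_M(σ)) / ∑_{σ'}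 exp(−β·H^Semi_M(σ')) converges, as M → ∞, to exp(−β·H^Hop(σ)) / ∑_{σ'} exp(−β·H^Hop(σ')). -/

import Mathlib

open Finset MeasureTheory ProbabilityTheory Filter
open Topology

/-- The embedding of a Boolean spin into `ℝ`. -/
noncomputable def spin : Bool → ℝ := fun b => if b then 1 else -1


section PM
variable {Ω : Type} [MeasurableSpace Ω] {μ : Measure Ω} [IsProbabilityMeasure μ]

lemma pm_map {f : Ω → ℝ} (hm : Measurable f) (hr : ∀ ω, f ω = 1 ∨ f ω = -1) :
    Measure.map f μ = μ {ω | f ω = 1} • Measure.dirac (1 : ℝ)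
      + μ {ω | f ω = -1} • Measure.dirac (-1 : ℝ) := by
  classical
  ext s hs
  rw [Measure.map_apply hm hs]
  have hA : MeasurableSet {ω | f ω = 1} := hm (measurableSet_singleton 1)
  have hsplit : f ⁻¹' s = ({ω | f ω = 1} ∩ f ⁻¹' s) ∪ ({ω | f ω = -1} ∩ f ⁻¹' s) := by
    ext ω; simp only [Set.mem_union, Set.mem_inter_iff, Set.mem_preimage, Set.mem_setOf_eq]
    rcases hr ω with h | h <;> simp [h]
  have hdisj : Disjoint ({ω | f ω = 1} ∩ f ⁻¹' s) ({ω | f ω = -1} ∩ f ⁻¹' s) := by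
    apply Set.disjoint_left.mpr
    rintro ω ⟨h1, -⟩ ⟨h2, -⟩
    rw [Set.mem_setOf_eq] at h1 h2; rw [h1] at h2; norm_num at h2
  rw [hsplit, measure_union hdisj (((hm (measurableSet_singleton (-1)))).inter (hm hs))]
  have e1 : {ω | f ω = 1} ∩ f ⁻¹' s = if (1:ℝ) ∈ s then {ω | f ω = 1} else ∅ := by
    split_ifs with h
    · ext ω; simp only [Set.mem_inter_iff, Set.mem_setOf_eq, Set.mem_preimage]
      exact ⟨fun ⟨a, _⟩ => a, fun a => ⟨a, by rw [a]; exact h⟩⟩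
    · ext ω; simp only [Set.mem_inter_iff, Set.mem_setOf_eq, Set.mem_preimage]
      constructor
      · rintro ⟨a, b⟩; rw [a] at b; exact absurd b h
      · intro hx; exact absurd hx (Set.notMem_empty ω)
  have e2 : {ω | f ω = -1} ∩ f ⁻¹' s = if (-1:ℝ) ∈ s then {ω | f ω = -1} else ∅ := by
    split_ifs with h
    · ext ω; simp only [Set.mem_inter_iff, Set.mem_setOf_eq, Set.mem_preimage]
      exact ⟨fun ⟨a, _⟩ => a, fun a => ⟨a, by rw [a]; exact h⟩⟩
    · ext ω; simp only [Set.mem_inter_iff, Set.mem_setOf_eq, Set.mem_preimage]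
      constructor
      · rintro ⟨a, b⟩; rw [a] at b; exact absurd b h
      · intro hx; exact absurd hx (Set.notMem_empty ω)
  rw [e1, e2]
  simp only [Measure.add_apply, Measure.smul_apply, Measure.dirac_apply' _ hs, smul_eq_mul]
  by_cases h1 : (1:ℝ) ∈ s <;> by_cases h2 : (-1:ℝ) ∈ s <;>
    simp [h1, h2, Set.indicator_of_mem, Set.indicator_of_notMem]

lemma pm_identDistrib {f g : Ω → ℝ} (hmf : Measurable f) (hmg : Measurable g)
    (hrf : ∀ ω, f ω = 1 ∨ f ω = -1) (hrg : ∀ ω, g ω = 1 ∨ g ω = -1)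
    (h1 : μ {ω | f ω = 1} = μ {ω | g ω = 1}) (h2 : μ {ω | f ω = -1} = μ {ω | g ω = -1}) :
    IdentDistrib f g μ μ :=
  ⟨hmf.aemeasurable, hmg.aemeasurable, by rw [pm_map hmf hrf, pm_map hmg hrg, h1, h2]⟩

lemma pm_integral {f : Ω → ℝ} (hm : Measurable f) (hr : ∀ ω, f ω = 1 ∨ f ω = -1)
    {p q : ℝ} (hp : 0 ≤ p) (hq : 0 ≤ q)
    (h1 : μ {ω | f ω = 1} = ENNReal.ofReal p) (h2 : μ {ω | f ω = -1} = ENNReal.ofReal q) :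
    ∫ ω, f ω ∂μ = p - q := by
  have hA : MeasurableSet {ω | f ω = 1} := hm (measurableSet_singleton 1)
  have hB : MeasurableSet {ω | f ω = -1} := hm (measurableSet_singleton (-1))
  have hf : f = fun ω => Set.indicator {ω | f ω = 1} (fun _ => (1:ℝ)) ω
      - Set.indicator {ω | f ω = -1} (fun _ => (1:ℝ)) ω := by
    funext ω
    rcases hr ω with h | h <;>
      simp [h, Set.indicator_apply, Set.mem_setOf_eq, show (1:ℝ) ≠ -1 by norm_num,
        show (-1:ℝ) ≠ 1 by norm_num]
  rw [hf, integral_sub (IntegrableOn.integrable_indicator (integrableOn_const (measure_ne_top μ _)) hA)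
    (IntegrableOn.integrable_indicator (integrableOn_const (measure_ne_top μ _)) hB),
    integral_indicator_const _ hA, integral_indicator_const _ hB, measureReal_def, measureReal_def, h1, h2]
  simp [ENNReal.toReal_ofReal hp, ENNReal.toReal_ofReal hq]

lemma pm_mul_law {f g : Ω → ℝ} (hmf : Measurable f) (hmg : Measurable g)
    (hrf : ∀ ω, f ω = 1 ∨ f ω = -1) (hrg : ∀ ω, g ω = 1 ∨ g ω = -1)
    (hind : IndepFun f g μ) :
    μ {ω | f ω * g ω = 1} = μ {ω | f ω = 1} * μ {ω | g ω = 1}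
        + μ {ω | f ω = -1} * μ {ω | g ω = -1}
      ∧ μ {ω | f ω * g ω = -1} = μ {ω | f ω = 1} * μ {ω | g ω = -1}
        + μ {ω | f ω = -1} * μ {ω | g ω = 1} := by
  have key : ∀ (a b : ℝ), μ ({ω | f ω = a} ∩ {ω | g ω = b}) = μ {ω | f ω = a} * μ {ω | g ω = b} := by
    intro a b
    have := hind.measure_inter_preimage_eq_mul {a} {b} (measurableSet_singleton a)
      (measurableSet_singleton b)
    exact this
  constructor
  · have hsplit : {ω | f ω * g ω = 1}
        = ({ω | f ω = 1} ∩ {ω | g ω = 1}) ∪ ({ω | f ω = -1} ∩ {ω | g ω = -1}) := by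
      ext ω
      simp only [Set.mem_setOf_eq, Set.mem_union, Set.mem_inter_iff]
      rcases hrf ω with h | h <;> rcases hrg ω with h' | h' <;> simp [h, h'] <;> norm_num
    have hdisj : Disjoint ({ω | f ω = 1} ∩ {ω | g ω = 1}) ({ω | f ω = -1} ∩ {ω | g ω = -1}) := by
      apply Set.disjoint_left.mpr
      rintro ω ⟨h1, -⟩ ⟨h2, -⟩
      rw [Set.mem_setOf_eq] at h1 h2; rw [h1] at h2; norm_num at h2
    rw [hsplit, measure_union hdisj ((hmf (measurableSet_singleton (-1))).inter
      (hmg (measurableSet_singleton (-1)))), key, key]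
  · have hsplit : {ω | f ω * g ω = -1}
        = ({ω | f ω = 1} ∩ {ω | g ω = -1}) ∪ ({ω | f ω = -1} ∩ {ω | g ω = 1}) := by
      ext ω
      simp only [Set.mem_setOf_eq, Set.mem_union, Set.mem_inter_iff]
      rcases hrf ω with h | h <;> rcases hrg ω with h' | h' <;> simp [h, h'] <;> norm_num
    have hdisj : Disjoint ({ω | f ω = 1} ∩ {ω | g ω = -1}) ({ω | f ω = -1} ∩ {ω | g ω = 1}) := by
      apply Set.disjoint_left.mpr
      rintro ω ⟨h1, -⟩ ⟨h2, -⟩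
      rw [Set.mem_setOf_eq] at h1 h2; rw [h1] at h2; norm_num at h2
    rw [hsplit, measure_union hdisj ((hmf (measurableSet_singleton (-1))).inter
      (hmg (measurableSet_singleton 1))), key, key]

lemma pm_integrable {f : Ω → ℝ} (hm : Measurable f) (hr : ∀ ω, f ω = 1 ∨ f ω = -1) :
    Integrable f μ := by
  apply Integrable.mono' (integrable_const (1:ℝ)) hm.aestronglyMeasurable
  filter_upwards with ω
  rcases hr ω with h | h <;> rw [h] <;> norm_num

end PM


set_option maxHeartbeats 1600000 in
/-- almost surely, the Boltzmann–Gibbs probabilities of the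
semi-supervised Hebbian learning Hamiltonian converge, in the big-data limit
`M → ∞`, to those of the Hopfield Hamiltonian. -/
theorem semisupervised_gibbs_tendsto_hopfield
    (N K : ℕ) (hN : 0 < N) (hK : 0 < K)
    (β r s : ℝ) (hβ : 0 < β) (hr0 : 0 < r) (hr1 : r ≤ 1)
    (hs0 : 0 < s) (hs1 : s < 1)
    {Ω : Type} [MeasurableSpace Ω] (μ : Measure Ω) [IsProbabilityMeasure μ]
    (ξ : Fin N → Fin K → Ω → ℝ) (χ : Fin N → Fin K → ℕ → Ω → ℝ)
    (hmeasξ : ∀ i k, Measurable (ξ i k))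
    (hmeasχ : ∀ i k a, Measurable (χ i k a))
    (hrangeξ : ∀ i k ω, ξ i k ω = 1 ∨ ξ i k ω = -1)
    (hrangeχ : ∀ i k a ω, χ i k a ω = 1 ∨ χ i k a ω = -1)
    (hlawξ : ∀ i k, μ {ω | ξ i k ω = 1} = ENNReal.ofReal (1 / 2)
      ∧ μ {ω | ξ i k ω = -1} = ENNReal.ofReal (1 / 2))
    (hlawχ : ∀ i k a, μ {ω | χ i k a ω = 1} = ENNReal.ofReal ((1 + r) / 2)
      ∧ μ {ω | χ i k a ω = -1} = ENNReal.ofReal ((1 - r) / 2))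
    (hindep : iIndepFun
      (Sum.elim (fun q : Fin N × Fin K => ξ q.1 q.2)
        (fun q : Fin N × Fin K × ℕ => χ q.1 q.2.1 q.2.2)) μ)
    (η : Fin N → Fin K → ℕ → Ω → ℝ)
    (hη : ∀ i k a ω, η i k a ω = χ i k a ω * ξ i k ω)
    -- labelled / unlabelled sample sizes and entropy parameters
    (M₁ M₂ : ℕ → ℕ) (hM₁ : ∀ M, M₁ M = ⌈s * (M : ℝ)⌉₊) (hM₂ : ∀ M, M₂ M = M - M₁ M)
    (sM ρM ρsM ρuM : ℕ → ℝ)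
    (hsM : ∀ M, sM M = (M₁ M : ℝ) / (M : ℝ))
    (hρM : ∀ M, ρM M = (1 - r ^ 2) / ((M : ℝ) * r ^ 2))
    (hρsM : ∀ M, ρsM M = ρM M / sM M)
    (hρuM : ∀ M, ρuM M = ρM M / (1 - sM M))
    -- order parameters built from the labelled / unlabelled examples
    (ntilde : ℕ → (Fin N → Bool) → Fin K → Ω → ℝ)
    (hnt : ∀ M σ k ω, ntilde M σ k ω
      = (1 / ((M₁ M : ℝ) * N)) * ∑ b ∈ Finset.range (M₁ M), ∑ i : Fin N,
          η i k b ω * spin (σ i))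
    (n : ℕ → (Fin N → Bool) → Fin K → ℕ → Ω → ℝ)
    (hn : ∀ M σ k a ω, n M σ k a ω
      = (1 / (N : ℝ)) * ∑ i : Fin N, η i k (M₁ M + a) ω * spin (σ i))
    (HSemi : ℕ → (Fin N → Bool) → Ω → ℝ)
    (hHSemi : ∀ M σ ω, HSemi M σ ω
      = -((N : ℝ) / (2 * r ^ 2 * (M₂ M : ℝ))) * ∑ a ∈ Finset.range (M₂ M),
          ∑ k : Fin K,
            (sM M * ntilde M σ k ω / Real.sqrt (1 + ρsM M)
              + (1 - sM M) * n M σ k a ω / Real.sqrt (1 + ρuM M)) ^ 2)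
    (HHop : (Fin N → Bool) → Ω → ℝ)
    (hHHop : ∀ σ ω, HHop σ ω = -((N : ℝ) / 2) * ∑ k : Fin K,
      ((1 / (N : ℝ)) * ∑ i : Fin N, ξ i k ω * spin (σ i)) ^ 2) :
    ∀ᵐ ω ∂μ, ∀ σ : Fin N → Bool,
      Tendsto (fun M : ℕ =>
          Real.exp (-β * HSemi M σ ω)
            / ∑ σ' : Fin N → Bool, Real.exp (-β * HSemi M σ' ω))
        atTop
        (nhds (Real.exp (-β * HHop σ ω)
          / ∑ σ' : Fin N → Bool, Real.exp (-β * HHop σ' ω))) := by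
  classical
  -- measurability of the whole family
  set F := Sum.elim (fun q : Fin N × Fin K => ξ q.1 q.2)
      (fun q : Fin N × Fin K × ℕ => χ q.1 q.2.1 q.2.2) with hF
  have hFmeas : ∀ idx, Measurable (F idx) := by
    rintro (⟨i, k⟩ | ⟨i, k, a⟩)
    · exact hmeasξ i k
    · exact hmeasχ i k a
  -- part 1 of the good event: SLLN for each χ i k
  have AS1 : ∀ (i : Fin N) (k : Fin K), ∀ᵐ ω ∂μ,
      Tendsto (fun nn : ℕ => (∑ a ∈ Finset.range nn, χ i k a ω) / nn) atTop (𝓝 r) := by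
    intro i k
    have hint : Integrable (χ i k 0) μ := pm_integrable (hmeasχ i k 0) (hrangeχ i k 0)
    have hpair : Pairwise (Function.onFun (IndepFun · · μ) fun a => χ i k a) := by
      intro a b hab
      exact hindep.indepFun
        (show (Sum.inr (i, k, a) : (Fin N × Fin K) ⊕ (Fin N × Fin K × ℕ)) ≠ Sum.inr (i, k, b)
          by simp [hab])
    have hident : ∀ a, IdentDistrib (χ i k a) (χ i k 0) μ μ := fun a =>
      pm_identDistrib (hmeasχ i k a) (hmeasχ i k 0) (hrangeχ i k a) (hrangeχ i k 0)
        (by rw [(hlawχ i k a).1, (hlawχ i k 0).1]) (by rw [(hlawχ i k a).2, (hlawχ i k 0).2])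
    have h := strong_law_ae_real (fun a => χ i k a) hint hpair hident
    have hInt : μ[χ i k 0] = r := by
      have := pm_integral (μ := μ) (hmeasχ i k 0) (hrangeχ i k 0)
        (by linarith) (by linarith) (hlawχ i k 0).1 (hlawχ i k 0).2
      rw [show μ[χ i k 0] = ∫ ω, χ i k 0 ω ∂μ from rfl, this]; ring
    rw [hInt] at h; exact h
  -- part 2: SLLN for the products χ i k · χ j k, i ≠ j
  have AS2 : ∀ (i j : Fin N) (k : Fin K), i ≠ j → ∀ᵐ ω ∂μ,
      Tendsto (fun nn : ℕ => (∑ a ∈ Finset.range nn, χ i k a ω * χ j k a ω) / nn)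
        atTop (𝓝 (r ^ 2)) := by
    intro i j k hij
    set X : ℕ → Ω → ℝ := fun a ω => χ i k a ω * χ j k a ω with hX
    have hmX : ∀ a, Measurable (X a) := fun a => (hmeasχ i k a).mul (hmeasχ j k a)
    have hrX : ∀ a ω, X a ω = 1 ∨ X a ω = -1 := by
      intro a ω
      rcases hrangeχ i k a ω with h | h <;> rcases hrangeχ j k a ω with h' | h' <;>
        simp [hX, h, h']
    have hcomp : ∀ a, IndepFun (χ i k a) (χ j k a) μ := by
      intro a
      exact hindep.indepFun
        (show (Sum.inr (i, k, a) : (Fin N × Fin K) ⊕ (Fin N × Fin K × ℕ)) ≠ Sum.inr (j, k, a)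
          by simp [hij])
    have hlawX : ∀ a, μ {ω | X a ω = 1}
          = ENNReal.ofReal ((1 + r) / 2) * ENNReal.ofReal ((1 + r) / 2)
            + ENNReal.ofReal ((1 - r) / 2) * ENNReal.ofReal ((1 - r) / 2)
        ∧ μ {ω | X a ω = -1}
          = ENNReal.ofReal ((1 + r) / 2) * ENNReal.ofReal ((1 - r) / 2)
            + ENNReal.ofReal ((1 - r) / 2) * ENNReal.ofReal ((1 + r) / 2) := by
      intro a
      have := pm_mul_law (μ := μ) (hmeasχ i k a) (hmeasχ j k a) (hrangeχ i k a)
        (hrangeχ j k a) (hcomp a)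
      rw [(hlawχ i k a).1, (hlawχ i k a).2, (hlawχ j k a).1, (hlawχ j k a).2] at this
      exact this
    have hint : Integrable (X 0) μ := pm_integrable (hmX 0) (hrX 0)
    have hpair : Pairwise (Function.onFun (IndepFun · · μ) X) := by
      intro a b hab
      have := hindep.indepFun_mul_mul hFmeas
        (Sum.inr (i, k, a)) (Sum.inr (j, k, a)) (Sum.inr (i, k, b)) (Sum.inr (j, k, b))
        (by simp [hab]) (by simp [hij]) (by simp [hij.symm]) (by simp [hab])
      exact this
    have hident : ∀ a, IdentDistrib (X a) (X 0) μ μ := fun a =>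
      pm_identDistrib (hmX a) (hmX 0) (hrX a) (hrX 0)
        (by rw [(hlawX a).1, (hlawX 0).1]) (by rw [(hlawX a).2, (hlawX 0).2])
    have h := strong_law_ae_real X hint hpair hident
    have h1r : (0:ℝ) ≤ (1 + r) / 2 := by linarith
    have h2r : (0:ℝ) ≤ (1 - r) / 2 := by linarith
    have hp : (0:ℝ) ≤ ((1 + r) / 2) * ((1 + r) / 2) + ((1 - r) / 2) * ((1 - r) / 2) :=
      by positivity
    have hq : (0:ℝ) ≤ ((1 + r) / 2) * ((1 - r) / 2) + ((1 - r) / 2) * ((1 + r) / 2) := by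
      have := mul_nonneg h1r h2r; linarith
    have hInt : μ[X 0] = r ^ 2 := by
      have hmap1 : μ {ω | X 0 ω = 1}
          = ENNReal.ofReal (((1 + r) / 2) * ((1 + r) / 2) + ((1 - r) / 2) * ((1 - r) / 2)) := by
        rw [(hlawX 0).1, ← ENNReal.ofReal_mul h1r, ← ENNReal.ofReal_mul h2r,
          ← ENNReal.ofReal_add (by positivity) (by positivity)]
      have hmap2 : μ {ω | X 0 ω = -1}
          = ENNReal.ofReal (((1 + r) / 2) * ((1 - r) / 2) + ((1 - r) / 2) * ((1 + r) / 2)) := by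
        rw [(hlawX 0).2, ← ENNReal.ofReal_mul h1r, ← ENNReal.ofReal_mul h2r,
          ← ENNReal.ofReal_add (mul_nonneg h1r h2r) (mul_nonneg h2r h1r)]
      have := pm_integral (μ := μ) (hmX 0) (hrX 0) hp hq hmap1 hmap2
      rw [show μ[X 0] = ∫ ω, X 0 ω ∂μ from rfl, this]; ring
    rw [hInt] at h; exact h
  -- deterministic facts about the sequences M₁, M₂, sM, ρ's
  have hNR : (0:ℝ) < N := Nat.cast_pos.mpr hN
  have h1s : (0:ℝ) < 1 - s := by linarith
  have hcastTop : Tendsto (fun M : ℕ => (M : ℝ)) atTop atTop := tendsto_natCast_atTop_atTop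
  have hM1castTop : Tendsto (fun M : ℕ => (M₁ M : ℝ)) atTop atTop := by
    apply tendsto_atTop_mono (fun M => ?_) (hcastTop.const_mul_atTop hs0)
    rw [hM₁ M]; exact Nat.le_ceil _
  have hM1inf : Tendsto M₁ atTop atTop := tendsto_natCast_atTop_iff.mp hM1castTop
  have hratio1 : Tendsto (fun M : ℕ => (M₁ M : ℝ) / M) atTop (𝓝 s) := by
    apply tendsto_of_tendsto_of_tendsto_of_le_of_le' (g := fun _ : ℕ => s)
      (h := fun M : ℕ => s + 1 / M) tendsto_const_nhds
      (by simpa using (tendsto_const_nhds.add tendsto_one_div_atTop_nhds_zero_nat :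
        Tendsto (fun M : ℕ => s + 1 / (M:ℝ)) atTop (𝓝 (s + 0))))
    · filter_upwards [eventually_ge_atTop 1] with M hM
      have hMpos : (0:ℝ) < M := by exact_mod_cast hM
      rw [hM₁ M, le_div_iff₀ hMpos]
      exact Nat.le_ceil _
    · filter_upwards [eventually_ge_atTop 1] with M hM
      have hMpos : (0:ℝ) < M := by exact_mod_cast hM
      rw [hM₁ M, div_le_iff₀ hMpos]
      have h1 := (Nat.ceil_lt_add_one (by positivity : (0:ℝ) ≤ s * M)).le
      have h2 : s * (M:ℝ) + 1 = (s + 1/M) * M := by field_simp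
      linarith
  have hMM : ∀ᶠ M in atTop, M₁ M + M₂ M = M ∧ 1 ≤ M₂ M ∧ 1 ≤ M₁ M := by
    filter_upwards [hcastTop.eventually_ge_atTop (2 / (1 - s)), eventually_ge_atTop 1]
      with M hMbig hM1
    have hMpos : (0:ℝ) < M := by exact_mod_cast hM1
    have hlt : M₁ M < M := by
      have hcast : (M₁ M : ℝ) < M := by
        rw [hM₁ M]
        calc (⌈s * (M:ℝ)⌉₊ : ℝ) < s * M + 1 := Nat.ceil_lt_add_one (by positivity)
          _ ≤ M := by
            have : 2 ≤ (1 - s) * M := by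
              rw [div_le_iff₀ h1s] at hMbig; linarith
            nlinarith
      exact_mod_cast hcast
    have hpos : 1 ≤ M₁ M := by
      rw [hM₁ M]; exact Nat.one_le_iff_ne_zero.mpr (by
        simp only [ne_eq, Nat.ceil_eq_zero, not_le]; positivity)
    refine ⟨?_, ?_, hpos⟩ <;> rw [hM₂ M] <;> omega
  have hsMlim : Tendsto sM atTop (𝓝 s) := by
    have : sM = fun M : ℕ => (M₁ M : ℝ) / M := funext hsM
    rw [this]; exact hratio1
  have hratio2 : Tendsto (fun M : ℕ => (M₂ M : ℝ) / M) atTop (𝓝 (1 - s)) := by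
    apply Tendsto.congr' _ (tendsto_const_nhds.sub hratio1)
    filter_upwards [hMM, eventually_ge_atTop 1] with M hM hM1
    have hMpos : (0:ℝ) < M := by exact_mod_cast hM1
    have hcast : (M₁ M : ℝ) + (M₂ M : ℝ) = M := by exact_mod_cast hM.1
    field_simp
    linarith
  have hM2castTop : Tendsto (fun M : ℕ => (M₂ M : ℝ)) atTop atTop := by
    apply Tendsto.congr' _ ((hratio2.pos_mul_atTop h1s) hcastTop)
    filter_upwards [eventually_ge_atTop 1] with M hM1
    have hMpos : (0:ℝ) < M := by exact_mod_cast hM1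
    field_simp
  have hM2inf : Tendsto M₂ atTop atTop := tendsto_natCast_atTop_iff.mp hM2castTop
  have hMdivM2 : Tendsto (fun M : ℕ => (M : ℝ) / M₂ M) atTop (𝓝 (1 - s)⁻¹) := by
    exact (hratio2.inv₀ h1s.ne').congr fun M => inv_div _ _
  have hM1divM2 : Tendsto (fun M : ℕ => (M₁ M : ℝ) / M₂ M) atTop (𝓝 (s * (1 - s)⁻¹)) := by
    apply Tendsto.congr' _ (hratio1.mul hMdivM2)
    filter_upwards [hMM, eventually_ge_atTop 1] with M hM hM1
    have hMpos : (0:ℝ) < M := by exact_mod_cast hM1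
    have hM2pos : (0:ℝ) < M₂ M := by exact_mod_cast hM.2.1
    field_simp
  -- the key averaging lemma along the unlabelled window
  have keyS : ∀ (c : ℕ → ℝ) (L : ℝ),
      Tendsto (fun nn : ℕ => (∑ a ∈ Finset.range nn, c a) / nn) atTop (𝓝 L) →
      Tendsto (fun M : ℕ => (∑ a ∈ Finset.range (M₂ M), c (M₁ M + a)) / (M₂ M : ℝ))
        atTop (𝓝 L) := by
    intro c L h
    have h1 : Tendsto (fun M : ℕ => (∑ a ∈ Finset.range (M₁ M), c a) / (M₁ M : ℝ))
        atTop (𝓝 L) := h.comp hM1inf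
    have hlim : (1 - s)⁻¹ * L - s * (1 - s)⁻¹ * L = L := by field_simp
    have hMain := (hMdivM2.mul h).sub (hM1divM2.mul h1)
    rw [hlim] at hMain
    apply Tendsto.congr' _ hMain
    filter_upwards [hMM, eventually_ge_atTop 1] with M hM hM1
    have hMpos : (0:ℝ) < M := by exact_mod_cast hM1
    have hM2pos : (0:ℝ) < M₂ M := by exact_mod_cast hM.2.1
    have hM1pos : (0:ℝ) < M₁ M := by exact_mod_cast hM.2.2
    have hsum : ∑ a ∈ Finset.range (M₂ M), c (M₁ M + a)
        = (∑ a ∈ Finset.range M, c a) - ∑ a ∈ Finset.range (M₁ M), c a := by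
      have hle : M₁ M ≤ M := by omega
      have e1 := Finset.sum_range_add_sum_Ico c hle
      have e2 : ∑ a ∈ Finset.Ico (M₁ M) M, c a
          = ∑ a ∈ Finset.range (M - M₁ M), c (M₁ M + a) := Finset.sum_Ico_eq_sum_range c (M₁ M) M
      have e3 : M - M₁ M = M₂ M := by omega
      rw [e3] at e2
      rw [← e2]; linarith
    rw [hsum]
    field_simp
  -- entropy parameters vanish
  have hρMlim : Tendsto ρM atTop (𝓝 0) := by
    have : ρM = fun M : ℕ => (1 - r ^ 2) / ((M : ℝ) * r ^ 2) := funext hρM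
    rw [this]
    exact tendsto_const_nhds.div_atTop (hcastTop.atTop_mul_const (by positivity))
  have hρsMlim : Tendsto ρsM atTop (𝓝 0) := by
    have : ρsM = fun M => ρM M / sM M := funext hρsM
    rw [this]
    have h' := hρMlim.div hsMlim hs0.ne'
    rw [zero_div] at h'; exact h'
  have hρuMlim : Tendsto ρuM atTop (𝓝 0) := by
    have : ρuM = fun M => ρM M / (1 - sM M) := funext hρuM
    rw [this]
    have h' := hρMlim.div (tendsto_const_nhds.sub hsMlim) h1s.ne'
    rw [zero_div] at h'; exact h'
  have hsqrts : Tendsto (fun M => Real.sqrt (1 + ρsM M)) atTop (𝓝 1) := by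
    have h0 : Tendsto (fun M : ℕ => 1 + ρsM M) atTop (𝓝 (1 + 0)) :=
      tendsto_const_nhds.add hρsMlim
    have := h0.sqrt
    simpa using this
  have hsqrtu : Tendsto (fun M => Real.sqrt (1 + ρuM M)) atTop (𝓝 1) := by
    have h0 : Tendsto (fun M : ℕ => 1 + ρuM M) atTop (𝓝 (1 + 0)) :=
      tendsto_const_nhds.add hρuMlim
    have := h0.sqrt
    simpa using this
  -- the almost sure event
  have hAE1 : ∀ᵐ ω ∂μ, ∀ (i : Fin N) (k : Fin K),
      Tendsto (fun nn : ℕ => (∑ a ∈ Finset.range nn, χ i k a ω) / nn) atTop (𝓝 r) :=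
    ae_all_iff.2 fun i => ae_all_iff.2 fun k => AS1 i k
  have hAE2 : ∀ᵐ ω ∂μ, ∀ (i j : Fin N) (k : Fin K), i ≠ j →
      Tendsto (fun nn : ℕ => (∑ a ∈ Finset.range nn, χ i k a ω * χ j k a ω) / nn)
        atTop (𝓝 (r ^ 2)) := by
    refine ae_all_iff.2 fun i => ae_all_iff.2 fun j => ae_all_iff.2 fun k => ?_
    by_cases hij : i = j
    · filter_upwards with ω h; exact absurd hij h
    · filter_upwards [AS2 i j k hij] with ω h _; exact h
  filter_upwards [hAE1, hAE2] with ω hω1 hω2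
  -- the additive constant
  set C : ℝ := -((K : ℝ) * ((1 - s) ^ 2 * (1 - r ^ 2)) / (2 * r ^ 2)) with hC
  -- convergence of the Hamiltonians for every configuration
  have hHS : ∀ σ : Fin N → Bool,
      Tendsto (fun M => HSemi M σ ω) atTop (𝓝 (HHop σ ω + C)) := by
    intro σ
    set e : Fin K → Fin N → ℝ := fun k i => ξ i k ω * spin (σ i) with he_def
    set m : Fin K → ℝ := fun k => (1 / (N : ℝ)) * ∑ i, e k i with hm_def
    have hspin : ∀ i, spin (σ i) = 1 ∨ spin (σ i) = -1 := fun i => by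
      cases σ i <;> simp [spin]
    have he2 : ∀ k i, e k i * e k i = 1 := by
      intro k i
      rcases hrangeξ i k ω with h | h <;> rcases hspin i with h' | h' <;>
        simp [he_def, h, h']
    -- convergence of the labelled overlap
    have hnt_lim : ∀ k, Tendsto (fun M => ntilde M σ k ω) atTop (𝓝 (r * m k)) := by
      intro k
      have hrepr : ∀ M, ntilde M σ k ω
          = ∑ i, (e k i / N) * ((∑ b ∈ Finset.range (M₁ M), χ i k b ω) / (M₁ M : ℝ)) := by
        intro M
        rw [hnt, Finset.sum_comm, Finset.mul_sum]
        refine Finset.sum_congr rfl fun i _ => ?_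
        have h1 : ∀ b, η i k b ω * spin (σ i) = χ i k b ω * e k i := fun b => by
          rw [hη]; simp only [he_def]; ring
        rw [Finset.sum_congr rfl fun b _ => h1 b, ← Finset.sum_mul]
        ring
      have hlim : Tendsto
          (fun M => ∑ i, (e k i / N) * ((∑ b ∈ Finset.range (M₁ M), χ i k b ω) / (M₁ M : ℝ)))
          atTop (𝓝 (∑ i, (e k i / N) * r)) :=
        tendsto_finset_sum _ fun i _ => ((hω1 i k).comp hM1inf).const_mul _
      have hval : ∑ i, (e k i / N) * r = r * m k := by
        simp only [hm_def, Finset.mul_sum]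
        refine Finset.sum_congr rfl fun i _ => by ring
      rw [hval] at hlim
      exact hlim.congr fun M => (hrepr M).symm
    -- averaged unlabelled overlap
    have havg_n : ∀ k, Tendsto
        (fun M => (∑ a ∈ Finset.range (M₂ M), n M σ k a ω) / (M₂ M : ℝ))
        atTop (𝓝 (r * m k)) := by
      intro k
      have hrepr : ∀ M, (∑ a ∈ Finset.range (M₂ M), n M σ k a ω) / (M₂ M : ℝ)
          = ∑ i, (e k i / N)
              * ((∑ a ∈ Finset.range (M₂ M), χ i k (M₁ M + a) ω) / (M₂ M : ℝ)) := by
        intro M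
        have h1 : ∀ a, n M σ k a ω = ∑ i, (χ i k (M₁ M + a) ω * e k i) / N := by
          intro a
          rw [hn, Finset.mul_sum]
          refine Finset.sum_congr rfl fun i _ => ?_
          rw [hη]; simp only [he_def]; ring
        rw [Finset.sum_congr rfl fun a _ => h1 a, Finset.sum_comm, Finset.sum_div]
        refine Finset.sum_congr rfl fun i _ => ?_
        rw [← Finset.sum_div, ← Finset.sum_mul]
        ring
      have hlim : Tendsto (fun M => ∑ i, (e k i / N)
          * ((∑ a ∈ Finset.range (M₂ M), χ i k (M₁ M + a) ω) / (M₂ M : ℝ)))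
          atTop (𝓝 (∑ i, (e k i / N) * r)) :=
        tendsto_finset_sum _ fun i _ => (keyS (fun a => χ i k a ω) r (hω1 i k)).const_mul _
      have hval : ∑ i, (e k i / N) * r = r * m k := by
        simp only [hm_def, Finset.mul_sum]
        refine Finset.sum_congr rfl fun i _ => by ring
      rw [hval] at hlim
      exact hlim.congr fun M => (hrepr M).symm
    -- averaged square of the unlabelled overlap
    have hχχ : ∀ (i j : Fin N) (k : Fin K), Tendsto
        (fun M => (∑ a ∈ Finset.range (M₂ M), χ i k (M₁ M + a) ω * χ j k (M₁ M + a) ω)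
          / (M₂ M : ℝ)) atTop (𝓝 (if i = j then 1 else r ^ 2)) := by
      intro i j k
      by_cases hij : i = j
      · subst hij
        rw [if_pos rfl]
        refine keyS (fun a => χ i k a ω * χ i k a ω) 1 ?_
        have hone : ∀ a, χ i k a ω * χ i k a ω = 1 := fun a => by
          rcases hrangeχ i k a ω with h | h <;> rw [h] <;> norm_num
        apply Tendsto.congr' _ (tendsto_const_nhds : Tendsto (fun _ : ℕ => (1:ℝ)) atTop (𝓝 1))
        filter_upwards [eventually_ge_atTop 1] with nn hnn
        have : (0:ℝ) < nn := by exact_mod_cast hnn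
        rw [Finset.sum_congr rfl fun a _ => hone a, Finset.sum_const, Finset.card_range]
        simp [this.ne']
      · rw [if_neg hij]
        exact keyS (fun a => χ i k a ω * χ j k a ω) (r ^ 2) (hω2 i j k hij)
    have havg_n2 : ∀ k, Tendsto
        (fun M => (∑ a ∈ Finset.range (M₂ M), (n M σ k a ω) ^ 2) / (M₂ M : ℝ))
        atTop (𝓝 (r ^ 2 * (m k) ^ 2 + (1 - r ^ 2) / N)) := by
      intro k
      have hrepr : ∀ M, (∑ a ∈ Finset.range (M₂ M), (n M σ k a ω) ^ 2) / (M₂ M : ℝ)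
          = ∑ i, ∑ j, (e k i * e k j / (N : ℝ) ^ 2)
              * ((∑ a ∈ Finset.range (M₂ M), χ i k (M₁ M + a) ω * χ j k (M₁ M + a) ω)
                / (M₂ M : ℝ)) := by
        intro M
        have h1 : ∀ a, (n M σ k a ω) ^ 2
            = ∑ i, ∑ j, (χ i k (M₁ M + a) ω * χ j k (M₁ M + a) ω)
                * (e k i * e k j / (N : ℝ) ^ 2) := by
          intro a
          have hS : ∑ i, η i k (M₁ M + a) ω * spin (σ i)
              = ∑ i, χ i k (M₁ M + a) ω * e k i :=
            Finset.sum_congr rfl fun i _ => by rw [hη]; simp only [he_def]; ring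
          rw [hn, hS, pow_two, mul_mul_mul_comm, Finset.sum_mul_sum, Finset.mul_sum]
          refine Finset.sum_congr rfl fun i _ => ?_
          rw [Finset.mul_sum]
          refine Finset.sum_congr rfl fun j _ => by ring
        rw [Finset.sum_congr rfl fun a _ => h1 a]
        rw [show (∑ a ∈ Finset.range (M₂ M), ∑ i, ∑ j,
              (χ i k (M₁ M + a) ω * χ j k (M₁ M + a) ω) * (e k i * e k j / (N : ℝ) ^ 2))
            = ∑ i, ∑ j, ∑ a ∈ Finset.range (M₂ M),
              (χ i k (M₁ M + a) ω * χ j k (M₁ M + a) ω) * (e k i * e k j / (N : ℝ) ^ 2) from by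
          rw [Finset.sum_comm]
          exact Finset.sum_congr rfl fun i _ => Finset.sum_comm]
        rw [Finset.sum_div]
        refine Finset.sum_congr rfl fun i _ => ?_
        rw [Finset.sum_div]
        refine Finset.sum_congr rfl fun j _ => ?_
        rw [← Finset.sum_mul]
        ring
      have hlim : Tendsto (fun M => ∑ i, ∑ j, (e k i * e k j / (N : ℝ) ^ 2)
          * ((∑ a ∈ Finset.range (M₂ M), χ i k (M₁ M + a) ω * χ j k (M₁ M + a) ω)
            / (M₂ M : ℝ)))
          atTop (𝓝 (∑ i, ∑ j, (e k i * e k j / (N : ℝ) ^ 2)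
            * (if i = j then 1 else r ^ 2))) :=
        tendsto_finset_sum _ fun i _ => tendsto_finset_sum _ fun j _ =>
          (hχχ i j k).const_mul _
      have hval : ∑ i, ∑ j, (e k i * e k j / (N : ℝ) ^ 2) * (if i = j then 1 else r ^ 2)
          = r ^ 2 * (m k) ^ 2 + (1 - r ^ 2) / N := by
        have hterm : ∀ i j, (e k i * e k j / (N : ℝ) ^ 2) * (if i = j then 1 else r ^ 2)
            = (e k i * e k j) * r ^ 2 / (N : ℝ) ^ 2
              + (if i = j then (1 - r ^ 2) / (N : ℝ) ^ 2 else 0) := by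
          intro i j
          by_cases h : i = j
          · subst h
            rw [if_pos rfl, if_pos rfl, he2 k i]
            field_simp
            ring
          · rw [if_neg h, if_neg h]; ring
        rw [Finset.sum_congr rfl fun i _ => Finset.sum_congr rfl fun j _ => hterm i j]
        have h2 : ∀ i : Fin N, ∑ j, ((e k i * e k j) * r ^ 2 / (N : ℝ) ^ 2
            + (if i = j then (1 - r ^ 2) / (N : ℝ) ^ 2 else 0))
            = (e k i * (∑ j, e k j)) * r ^ 2 / (N : ℝ) ^ 2 + (1 - r ^ 2) / (N : ℝ) ^ 2 := by
          intro i
          rw [Finset.sum_add_distrib]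
          congr 1
          · rw [Finset.mul_sum, Finset.sum_mul, Finset.sum_div]
          · simp
        rw [Finset.sum_congr rfl fun i _ => h2 i, Finset.sum_add_distrib,
          Finset.sum_const, Finset.card_univ, Fintype.card_fin]
        have h3 : ∑ i, (e k i * (∑ j, e k j)) * r ^ 2 / (N : ℝ) ^ 2
            = ((∑ i, e k i) * (∑ j, e k j)) * r ^ 2 / (N : ℝ) ^ 2 := by
          rw [← Finset.sum_div, ← Finset.sum_mul, ← Finset.sum_mul]
        rw [h3]
        simp only [hm_def]
        field_simp
        have h4 : (N:ℝ) ^ 3 * (N:ℝ)⁻¹ ^ 2 = N := by field_simp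
        linear_combination (1 - r ^ 2) * h4
      rw [hval] at hlim
      exact hlim.congr fun M => (hrepr M).symm
    -- per-pattern combined convergence
    have hQ : ∀ k, Tendsto (fun M => (∑ a ∈ Finset.range (M₂ M),
        (sM M * ntilde M σ k ω / Real.sqrt (1 + ρsM M)
          + (1 - sM M) * n M σ k a ω / Real.sqrt (1 + ρuM M)) ^ 2) / (M₂ M : ℝ))
        atTop (𝓝 (r ^ 2 * (m k) ^ 2 + (1 - s) ^ 2 * (1 - r ^ 2) / N)) := by
      intro k
      set α : ℕ → ℝ := fun M => sM M * ntilde M σ k ω / Real.sqrt (1 + ρsM M) with hα_def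
      set b : ℕ → ℝ := fun M => (1 - sM M) / Real.sqrt (1 + ρuM M) with hb_def
      have hα : Tendsto α atTop (𝓝 (s * (r * m k))) := by
        have := ((hsMlim.mul (hnt_lim k)).div hsqrts one_ne_zero :
          Tendsto (fun M => sM M * ntilde M σ k ω / Real.sqrt (1 + ρsM M)) atTop _)
        rw [div_one] at this; exact this
      have hb : Tendsto b atTop (𝓝 (1 - s)) := by
        have h1 : Tendsto (fun M : ℕ => 1 - sM M) atTop (𝓝 (1 - s)) :=
          tendsto_const_nhds.sub hsMlim
        have := (h1.div hsqrtu one_ne_zero :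
          Tendsto (fun M => (1 - sM M) / Real.sqrt (1 + ρuM M)) atTop _)
        rw [div_one] at this; exact this
      have hsum3 : Tendsto (fun M => α M ^ 2
          + 2 * α M * b M * ((∑ a ∈ Finset.range (M₂ M), n M σ k a ω) / (M₂ M : ℝ))
          + b M ^ 2 * ((∑ a ∈ Finset.range (M₂ M), (n M σ k a ω) ^ 2) / (M₂ M : ℝ)))
          atTop (𝓝 ((s * (r * m k)) ^ 2
            + 2 * (s * (r * m k)) * (1 - s) * (r * m k)
            + (1 - s) ^ 2 * (r ^ 2 * (m k) ^ 2 + (1 - r ^ 2) / N))) :=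
        (((hα.pow 2).add ((((hα.const_mul 2)).mul hb).mul (havg_n k)))).add
          ((hb.pow 2).mul (havg_n2 k))
      have hvals : (s * (r * m k)) ^ 2 + 2 * (s * (r * m k)) * (1 - s) * (r * m k)
          + (1 - s) ^ 2 * (r ^ 2 * (m k) ^ 2 + (1 - r ^ 2) / N)
          = r ^ 2 * (m k) ^ 2 + (1 - s) ^ 2 * (1 - r ^ 2) / N := by ring
      rw [hvals] at hsum3
      apply Tendsto.congr' _ hsum3
      filter_upwards [hMM] with M hM
      have hM2pos : (0:ℝ) < M₂ M := by exact_mod_cast hM.2.1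
      have hexp : ∑ a ∈ Finset.range (M₂ M),
          (sM M * ntilde M σ k ω / Real.sqrt (1 + ρsM M)
            + (1 - sM M) * n M σ k a ω / Real.sqrt (1 + ρuM M)) ^ 2
          = (M₂ M : ℝ) * α M ^ 2
            + 2 * α M * b M * (∑ a ∈ Finset.range (M₂ M), n M σ k a ω)
            + b M ^ 2 * (∑ a ∈ Finset.range (M₂ M), (n M σ k a ω) ^ 2) := by
        have hterm : ∀ a, (sM M * ntilde M σ k ω / Real.sqrt (1 + ρsM M)
            + (1 - sM M) * n M σ k a ω / Real.sqrt (1 + ρuM M)) ^ 2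
            = α M ^ 2 + 2 * α M * b M * n M σ k a ω + b M ^ 2 * (n M σ k a ω) ^ 2 := by
          intro a
          simp only [hα_def, hb_def]
          ring
        rw [Finset.sum_congr rfl fun a _ => hterm a, Finset.sum_add_distrib,
          Finset.sum_add_distrib, Finset.sum_const, Finset.card_range,
          ← Finset.mul_sum, ← Finset.mul_sum]
        simp [nsmul_eq_mul]
      rw [hexp]
      field_simp
    -- assembling the Hamiltonian convergence
    have hHsum : Tendsto (fun M => -((N : ℝ) / (2 * r ^ 2)) * ∑ k, (∑ a ∈ Finset.range (M₂ M),
        (sM M * ntilde M σ k ω / Real.sqrt (1 + ρsM M)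
          + (1 - sM M) * n M σ k a ω / Real.sqrt (1 + ρuM M)) ^ 2) / (M₂ M : ℝ))
        atTop (𝓝 (-((N : ℝ) / (2 * r ^ 2))
          * ∑ k, (r ^ 2 * (m k) ^ 2 + (1 - s) ^ 2 * (1 - r ^ 2) / N))) :=
      (tendsto_finset_sum _ fun k _ => hQ k).const_mul _
    have hlimval : -((N : ℝ) / (2 * r ^ 2))
        * ∑ k, (r ^ 2 * (m k) ^ 2 + (1 - s) ^ 2 * (1 - r ^ 2) / N) = HHop σ ω + C := by
      have hHop' : HHop σ ω = -((N : ℝ) / 2) * ∑ k, (m k) ^ 2 := by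
        rw [hHHop σ ω]
      rw [hHop', hC, Finset.sum_add_distrib, Finset.sum_const, Finset.card_univ,
        Fintype.card_fin, ← Finset.mul_sum, nsmul_eq_mul]
      field_simp
      ring
    rw [hlimval] at hHsum
    apply Tendsto.congr' _ hHsum
    filter_upwards [hMM] with M hM
    have hM2pos : (0:ℝ) < M₂ M := by exact_mod_cast hM.2.1
    rw [hHSemi, Finset.sum_comm]
    rw [show (∑ k : Fin K, (∑ a ∈ Finset.range (M₂ M),
        (sM M * ntilde M σ k ω / Real.sqrt (1 + ρsM M)
          + (1 - sM M) * n M σ k a ω / Real.sqrt (1 + ρuM M)) ^ 2) / (M₂ M : ℝ))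
        = (∑ k : Fin K, ∑ a ∈ Finset.range (M₂ M),
        (sM M * ntilde M σ k ω / Real.sqrt (1 + ρsM M)
          + (1 - sM M) * n M σ k a ω / Real.sqrt (1 + ρuM M)) ^ 2) / (M₂ M : ℝ) from
      (Finset.sum_div _ _ _).symm]
    field_simp
  -- conclusion: convergence of the Boltzmann-Gibbs probabilities
  intro σ
  have hnum : Tendsto (fun M => Real.exp (-β * HSemi M σ ω)) atTop
      (𝓝 (Real.exp (-β * (HHop σ ω + C)))) :=
    (Real.continuous_exp.tendsto _).comp ((hHS σ).const_mul (-β))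
  have hden : Tendsto (fun M => ∑ σ' : Fin N → Bool, Real.exp (-β * HSemi M σ' ω)) atTop
      (𝓝 (∑ σ' : Fin N → Bool, Real.exp (-β * (HHop σ' ω + C)))) :=
    tendsto_finset_sum _ fun σ' _ =>
      (Real.continuous_exp.tendsto _).comp ((hHS σ').const_mul (-β))
  have hpos : 0 < ∑ σ' : Fin N → Bool, Real.exp (-β * (HHop σ' ω + C)) :=
    Finset.sum_pos (fun _ _ => Real.exp_pos _) Finset.univ_nonempty
  have h := hnum.div hden hpos.ne'
  have hfrac : Real.exp (-β * (HHop σ ω + C))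
        / ∑ σ' : Fin N → Bool, Real.exp (-β * (HHop σ' ω + C))
      = Real.exp (-β * HHop σ ω) / ∑ σ' : Fin N → Bool, Real.exp (-β * HHop σ' ω) := by
    have hc : ∀ τ : Fin N → Bool, Real.exp (-β * (HHop τ ω + C))
        = Real.exp (-β * HHop τ ω) * Real.exp (-β * C) := fun τ => by
      rw [← Real.exp_add]; ring_nf
    simp only [hc]
    rw [← Finset.sum_mul, mul_div_mul_right _ _ (Real.exp_ne_zero (-β * C))]
  rw [hfrac] at h
  exact h
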